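/- Let d be a natural number and let M : Matrix (Fin d) (Fin d) ℝ be a weighted adjacency matrix. The support relation of M (the relation i → j holding when M i j ≠ 0) is acyclic (for every vertex i, ¬ Relation.TransGen (fun i j => M i j ≠ 0) i i) if and only if there exist a priority-score vector p : Fin d → ℝ and a weight matrix W : Matrix (Fin d) (Fin d) ℝ such that for all i, j, M i j = W i j * max (p j − p i) 0; i.e., M = W ∘ ReLU(grad(p)) where ∘ is the entrywise (Hadamard) product. -/

import Mathlib

/-! A cycle-free relation on a finite set is ranked strictly by the number of ancestors of a
vertex: along an edge `i → j`, every ancestor of `i` is an ancestor of `j`, and `i` itself is an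
ancestor of `j` but not of `i`. Conversely, a strict ranking rules out cycles. Finally, a matrix
factors as `W ∘ ReLU(grad p)` exactly when its support lies in `{(i, j) | p i < p j}`, the entries
of `W` on that support being `M i j / (p j - p i)`. -/

open Relation

section Ranking

variable {α : Type*} {r : α → α → Prop}

theorem Relation.TransGen.lt_of_forall_lt {β : Type*} [Preorder β] {f : α → β}
    (hf : ∀ a b, r a b → f a < f b) {a b : α} (h : TransGen r a b) : f a < f b := by
  simpa [transGen_eq_self] using h.lift f hf

variable [Fintype α]

open Classical in
noncomputable def ancestorCount (r : α → α → Prop) (a : α) : ℕ :=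
  (Finset.univ.filter fun k => TransGen r k a).card

theorem ancestorCount_lt (hr : ∀ a, ¬ TransGen r a a) {a b : α} (hab : r a b) :
    ancestorCount r a < ancestorCount r b := by
  classical
  refine Finset.card_lt_card ⟨fun k hk => ?_, fun hsub => ?_⟩
  · simp only [Finset.mem_filter, Finset.mem_univ, true_and] at hk ⊢
    exact hk.tail hab
  · have ha : a ∈ Finset.univ.filter fun k => TransGen r k a :=
      hsub (by simpa using TransGen.single hab)
    exact hr a (by simpa using ha)

theorem forall_not_transGen_self_iff_exists_lt_rank :
    (∀ a, ¬ TransGen r a a) ↔ ∃ p : α → ℝ, ∀ a b, r a b → p a < p b := by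
  refine ⟨fun hr => ⟨fun a => ancestorCount r a, fun a b hab => ?_⟩, ?_⟩
  · exact Nat.cast_lt.mpr (ancestorCount_lt hr hab)
  · rintro ⟨p, hp⟩ a hcyc
    exact lt_irrefl _ (hcyc.lt_of_forall_lt hp)

end Ranking

theorem exists_eq_mul_relu_sub_iff {ι K : Type*} [Field K] [LinearOrder K] [IsStrictOrderedRing K]
    (M : Matrix ι ι K) (p : ι → K) :
    (∃ W : Matrix ι ι K, ∀ i j, M i j = W i j * max (p j - p i) 0) ↔
      ∀ i j, M i j ≠ 0 → p i < p j := by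
  constructor
  · rintro ⟨W, hW⟩ i j hM
    by_contra! hle
    exact hM (by rw [hW, max_eq_right (sub_nonpos.mpr hle), mul_zero])
  · intro hsupp
    refine ⟨Matrix.of fun i j => M i j / max (p j - p i) 0, fun i j => ?_⟩
    by_cases hM : M i j = 0
    · simp [hM]
    · have hpos : 0 < p j - p i := sub_pos.mpr (hsupp i j hM)
      rw [Matrix.of_apply, max_eq_left hpos.le, div_mul_cancel₀ _ hpos.ne']

/-- **No-Curl characterization of weighted DAGs.** The support relation of a weighted
adjacency matrix `M` is acyclic iff there exist a priority-score vector `p` and a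
weight matrix `W` with `M i j = W i j * max (p j - p i) 0`, i.e.
`M = W ∘ ReLU(grad p)`. -/
theorem noCurl_characterization (d : ℕ) (M : Matrix (Fin d) (Fin d) ℝ) :
    (∀ i : Fin d, ¬ Relation.TransGen (fun i j => M i j ≠ 0) i i) ↔
      ∃ (p : Fin d → ℝ) (W : Matrix (Fin d) (Fin d) ℝ),
        ∀ i j : Fin d, M i j = W i j * max (p j - p i) 0 := by
  rw [forall_not_transGen_self_iff_exists_lt_rank]
  exact exists_congr fun p => (exists_eq_mul_relu_sub_iff M p).symm
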